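/- arXiv:2507.16225 — 7 statements merged into one kernel-verified Lean document; each statement's English description precedes it below -/
import Mathlib

section
/- Any congruence subgroup Γ of SL₂(ℤ) that contains the matrices [[1,1],[0,1]] and [[1,0],[N,1]] contains Γ₁(N). -/
/-!
Say `Γ(M) ≤ Γ`. As `Γ` contains the kernel of reduction mod `M`, it suffices that the reduction
of `A = [[a, b], [c, d]] ∈ Γ₁(N)` lies in the image of `Γ` in `SL₂(ℤ/M)`, which contains every
`[[1, x], [0, 1]]` and every `[[1, 0], [N y, 1]]`. Replacing `A` by `[[1, t], [0, 1]] A` for a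
suitable `t` makes `a` a unit `w = 1 + N β` modulo `M`; then, with `v = w⁻¹`,
  `A = [[1, 0], [c v, 1]] [[1, b w], [0, 1]] diag(w, v)`,
  `diag(w, v) = [[1, 0], [-N v, 1]] [[1, β], [0, 1]] [[1, 0], [N, 1]] [[1, -β v], [0, 1]]`,
and `N ∣ c`, so every factor lies in the image.
-/

open Matrix MatrixGroups

theorem Int.exists_isCoprime_add_mul {a c : ℤ} (h : IsCoprime a c) {M : ℕ} (hM : M ≠ 0) :
    ∃ t : ℤ, IsCoprime (a + t * c) M := by
  -- Each prime `p ∣ M` divides exactly one of `a` and `t`, and not both `a` and `c`.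
  let t : ℕ := ∏ p ∈ M.primeFactors with ¬((p : ℕ) : ℤ) ∣ a, p
  refine ⟨t, Int.isCoprime_iff_nat_coprime.mpr <| Nat.coprime_of_dvd fun p hp hpx hpM ↦ ?_⟩
  rw [Int.natAbs_natCast] at hpM
  rw [← Int.natCast_dvd] at hpx
  have hpt : (p : ℤ) ∣ t ↔ ¬(p : ℤ) ∣ a := by
    rw [Int.natCast_dvd_natCast, hp.prime.dvd_finsetProd_iff]
    constructor
    · rintro ⟨q, hq, hpq⟩
      rw [Finset.mem_filter] at hq
      rw [(Nat.prime_dvd_prime_iff_eq hp (Nat.prime_of_mem_primeFactors hq.1)).mp hpq]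
      exact hq.2
    · exact fun hpa ↦ ⟨p, Finset.mem_filter.mpr ⟨Nat.mem_primeFactors.mpr ⟨hp, hpM, hM⟩, hpa⟩,
        dvd_rfl⟩
  by_cases hpa : (p : ℤ) ∣ a
  · have hpc : ¬(p : ℤ) ∣ c := fun hpc ↦
      (Nat.prime_iff_prime_int.mp hp).not_isUnit (h.isUnit_of_dvd' hpa hpc)
    rcases Int.Prime.dvd_mul' hp ((dvd_add_right hpa).mp hpx) with hpt' | hpc'
    · exact hpt.mp hpt' hpa
    · exact hpc hpc'
  · exact hpa ((dvd_add_left ((hpt.mpr hpa).mul_right c)).mp hpx)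

namespace Matrix.SpecialLinearGroup

section Transvection

variable {ι R S : Type*} [DecidableEq ι] [Fintype ι] [CommRing R] [CommRing S] {i j : ι}

theorem transvection_zsmul (hij : i ≠ j) (b : R) (k : ℤ) :
    transvection hij (k • b) = transvection hij b ^ k := by
  induction k using Int.induction_on with
  | zero => simp
  | succ k ih => rw [add_smul, one_smul, transvection_add, ih, _root_.zpow_add_one]
  | pred k ih => rw [sub_smul, one_smul, sub_eq_add_neg, transvection_add, ih,
      ← transvection_inv, _root_.zpow_sub_one]

theorem map_transvection (f : R →+* S) (hij : i ≠ j) (b : R) :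
    map f (transvection hij b) = transvection hij (f b) := by
  ext k l
  simp [transvection_coe, Matrix.single_apply, Matrix.one_apply, apply_ite f]

theorem transvection_mem_map_of_mem (hij : i ≠ j) {f : ℤ →+* S} (hf : Function.Surjective f)
    {G : Subgroup (SpecialLinearGroup ι ℤ)} {b : ℤ} (h : transvection hij b ∈ G) (x : S) :
    transvection hij (f b * x) ∈ G.map (map f) := by
  obtain ⟨k, rfl⟩ := hf x
  refine ⟨transvection hij (k • b), transvection_zsmul hij b k ▸ G.zpow_mem h k, ?_⟩
  rw [map_transvection, smul_eq_mul, map_mul, mul_comm]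

end Transvection

section SL2

variable {R : Type*} [CommRing R]

abbrev upperTransvection (x : R) : SL(2, R) := transvection (zero_ne_one' (Fin 2)) x

abbrev lowerTransvection (y : R) : SL(2, R) := transvection (one_ne_zero' (Fin 2)) y

theorem coe_upperTransvection (x : R) :
    (upperTransvection x : Matrix (Fin 2) (Fin 2) R) = !![1, x; 0, 1] := by
  ext i j; fin_cases i <;> fin_cases j <;> simp [transvection_coe]

theorem coe_lowerTransvection (y : R) :
    (lowerTransvection y : Matrix (Fin 2) (Fin 2) R) = !![1, 0; y, 1] := by
  ext i j; fin_cases i <;> fin_cases j <;> simp [transvection_coe]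

theorem upperTransvection_eq_mk (x : R) :
    upperTransvection x = ⟨!![1, x; 0, 1], by simp [det_fin_two_of]⟩ :=
  Subtype.ext (coe_upperTransvection x)

theorem lowerTransvection_eq_mk (y : R) :
    lowerTransvection y = ⟨!![1, 0; y, 1], by simp [det_fin_two_of]⟩ :=
  Subtype.ext (coe_lowerTransvection y)

theorem coe_lower_upper_lower_upper {n β v : R} (hv : (1 + n * β) * v = 1) :
    ((lowerTransvection (-(n * v)) * upperTransvection β * lowerTransvection n *
      upperTransvection (-(β * v)) : SL(2, R)) : Matrix (Fin 2) (Fin 2) R) =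
      !![1 + n * β, 0; 0, v] := by
  simp only [coe_mul, coe_upperTransvection, coe_lowerTransvection]
  ext i j; fin_cases i <;> fin_cases j <;> simp [Matrix.mul_apply, Fin.sum_univ_two]
  · ring
  · linear_combination (-β) * hv
  · linear_combination (-n) * hv
  · linear_combination (n * β * v - 1) * hv

theorem coe_eq_lower_upper_diagonal (A : SL(2, R)) {v : R} (hv : A 0 0 * v = 1) :
    (A : Matrix (Fin 2) (Fin 2) R) =
      (lowerTransvection (A 1 0 * v) * upperTransvection (A 0 1 * A 0 0) : SL(2, R)) *
        !![A 0 0, 0; 0, v] := by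
  have hdet : A 0 0 * A 1 1 - A 0 1 * A 1 0 = 1 := by rw [← det_fin_two]; exact A.det_coe
  simp only [coe_mul, coe_upperTransvection, coe_lowerTransvection]
  ext i j; fin_cases i <;> fin_cases j <;> simp [Matrix.mul_apply, Fin.sum_univ_two]
  · linear_combination (-A 0 1) * hv
  · linear_combination (-A 1 0) * hv
  · linear_combination v * hdet - (A 1 1 + A 1 0 * A 0 1 * v) * hv

variable {n : R} {G : Subgroup SL(2, R)}

theorem mem_of_isUnit_apply_zero_zero (hU : ∀ x, upperTransvection x ∈ G)
    (hL : ∀ y, lowerTransvection (n * y) ∈ G) {A : SL(2, R)} (hA : IsUnit (A 0 0))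
    (ha : n ∣ A 0 0 - 1) (hc : n ∣ A 1 0) : A ∈ G := by
  obtain ⟨v, hv⟩ := hA.exists_right_inv
  obtain ⟨β, hβ⟩ := ha
  obtain ⟨ζ, hζ⟩ := hc
  have hβ' : A 0 0 = 1 + n * β := by rw [← hβ]; ring
  have hA' : A = lowerTransvection (A 1 0 * v) * upperTransvection (A 0 1 * A 0 0) *
      (lowerTransvection (-(n * v)) * upperTransvection β * lowerTransvection n *
        upperTransvection (-(β * v))) :=
    Subtype.ext <| by
      rw [coe_mul _ (_ * _), coe_lower_upper_lower_upper (hβ' ▸ hv), ← hβ',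
        ← coe_eq_lower_upper_diagonal A hv]
  rw [hA']
  refine G.mul_mem (G.mul_mem ?_ (hU _)) (G.mul_mem (G.mul_mem (G.mul_mem ?_ (hU _)) ?_) (hU _))
  · rw [hζ, mul_assoc]; exact hL _
  · rw [← mul_neg]; exact hL _
  · simpa using hL 1

theorem mem_of_isUnit_add_mul (hU : ∀ x, upperTransvection x ∈ G)
    (hL : ∀ y, lowerTransvection (n * y) ∈ G) {A : SL(2, R)} {t : R}
    (ht : IsUnit (A 0 0 + t * A 1 0)) (ha : n ∣ A 0 0 - 1) (hc : n ∣ A 1 0) : A ∈ G := by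
  have h00 : (upperTransvection t * A) 0 0 = A 0 0 + t * A 1 0 := by
    simp [coe_upperTransvection, mul_apply, Fin.sum_univ_two]
  have h10 : (upperTransvection t * A) 1 0 = A 1 0 := by
    simp [coe_upperTransvection, mul_apply, Fin.sum_univ_two]
  have hTA : upperTransvection t * A ∈ G := by
    refine mem_of_isUnit_apply_zero_zero hU hL (h00 ▸ ht) ?_ (h10 ▸ hc)
    rw [h00, add_sub_right_comm]
    exact dvd_add ha (dvd_mul_of_dvd_right hc t)
  simpa using G.mul_mem (G.inv_mem (hU t)) hTA

end SL2

end Matrix.SpecialLinearGroup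

open Matrix.SpecialLinearGroup CongruenceSubgroup

theorem gamma1_le_of_congruence_contains_T_and_lowerN (N : ℕ)
    (Γ : Subgroup SL(2, ℤ)) (hΓ : CongruenceSubgroup.IsCongruenceSubgroup Γ)
    (hT : (⟨!![1, 1; 0, 1], by simp [Matrix.det_fin_two_of]⟩ : SL(2, ℤ)) ∈ Γ)
    (hL : (⟨!![1, 0; (N : ℤ), 1], by simp [Matrix.det_fin_two_of]⟩ : SL(2, ℤ)) ∈ Γ) :
    CongruenceSubgroup.Gamma1 N ≤ Γ := by
  obtain ⟨M, hM, hΓM⟩ := hΓ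
  have hred := ZMod.ringHom_surjective (Int.castRingHom (ZMod M))
  have hU (x : ZMod M) : upperTransvection x ∈ Γ.map (map (Int.castRingHom (ZMod M))) := by
    convert transvection_mem_map_of_mem _ hred (upperTransvection_eq_mk (1 : ℤ) ▸ hT) x using 2
    simp
  have hL (y : ZMod M) :
      lowerTransvection ((N : ZMod M) * y) ∈ Γ.map (map (Int.castRingHom (ZMod M))) := by
    convert transvection_mem_map_of_mem _ hred (lowerTransvection_eq_mk (N : ℤ) ▸ hL) y using 2
    simp
  intro A hA
  obtain ⟨ha, -, hc⟩ := (Gamma1_mem N A).mp hA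
  obtain ⟨t, ht⟩ := Int.exists_isCoprime_add_mul (A.isCoprime_col 0) hM
  rw [← Subgroup.comap_map_eq_self hΓM]
  refine mem_of_isUnit_add_mul (t := t) hU hL ?_ ?_ ?_
  · simpa [isCoprime_zero_right] using ht.map (Int.castRingHom (ZMod M))
  · simpa using map_dvd (Int.castRingHom (ZMod M))
      ((ZMod.intCast_eq_intCast_iff_dvd_sub 1 _ N).mp (by exact_mod_cast ha.symm))
  · simpa using map_dvd (Int.castRingHom (ZMod M))
      ((ZMod.intCast_zmod_eq_zero_iff_dvd _ N).mp hc)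
end

section
/- For any prime p and positive integer N, the subgroup of SL₂(ℤ) generated by the matrix [[1,0],[N,1]] together with Γ₁(pN) equals Γ₁(N). -/
/-!
Let `H` be the group generated by `L = [[1, 0], [N, 1]]` and `Γ₁(pN)`; it contains every `T ^ x`
and every `L ^ y`. For a matrix of determinant one, membership in `Γ₁(M)` only depends on the first
column `(a, c)`, which must be `≡ (1, 0) mod M`. Left multiplication by `T ^ x` and `L ^ y` acts on
the first column by `a ↦ a + x c` and `c ↦ c + N y a`. Writing `a = 1 + N α` and `c = N s` for
an element of `Γ₁(N)`, three such moves first make `s` prime to `p`, then make `p ∣ α`, and finally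
make `p ∣ s`, landing in `Γ₁(pN) ⊆ H`.
-/

open Matrix MatrixGroups ModularGroup CongruenceSubgroup

theorem IsCoprime.exists_dvd_add_mul {R : Type*} [CommRing R] {u m : R} (h : IsCoprime u m)
    (t : R) : ∃ x, m ∣ t + x * u := by
  obtain ⟨a, b, hab⟩ := h
  exact ⟨-t * a, t * b, by linear_combination -t * hab⟩

theorem Prime.exists_not_dvd_add_mul {R : Type*} [CommRing R] {p a s : R} (hp : Prime p)
    (h : IsCoprime a s) : ∃ y, ¬ p ∣ s + y * a := by
  by_cases hs : p ∣ s
  · refine ⟨1, fun hsa => hp.not_isUnit (h.isUnit_of_dvd' ?_ hs)⟩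
    simpa using (dvd_add_right hs).mp hsa
  · exact ⟨0, by simpa using hs⟩

def lowerUnipotent (m : ℤ) : SL(2, ℤ) :=
  ⟨!![1, 0; m, 1], by simp [det_fin_two_of]⟩

@[simp]
theorem coe_lowerUnipotent (m : ℤ) :
    (lowerUnipotent m : Matrix (Fin 2) (Fin 2) ℤ) = !![1, 0; m, 1] :=
  rfl

theorem lowerUnipotent_mul (m k : ℤ) :
    lowerUnipotent m * lowerUnipotent k = lowerUnipotent (m + k) := by
  ext i j
  fin_cases i <;> fin_cases j <;> simp

theorem lowerUnipotent_zero : lowerUnipotent 0 = 1 := by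
  ext i j
  fin_cases i <;> fin_cases j <;> simp

theorem lowerUnipotent_zpow (m k : ℤ) : lowerUnipotent m ^ k = lowerUnipotent (m * k) := by
  induction k using Int.induction_on with
  | zero => simp [lowerUnipotent_zero]
  | succ k ih => rw [_root_.zpow_add_one, ih, lowerUnipotent_mul, mul_add_one]
  | pred k ih =>
    rw [_root_.zpow_sub_one, ih, mul_inv_eq_iff_eq_mul, lowerUnipotent_mul]
    ring_nf

theorem lowerUnipotent_mul_apply_zero_zero (m : ℤ) (γ : SL(2, ℤ)) :
    (lowerUnipotent m * γ) 0 0 = γ 0 0 := by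
  simp [mul_apply, Fin.sum_univ_two]

theorem lowerUnipotent_mul_apply_one_zero (m : ℤ) (γ : SL(2, ℤ)) :
    (lowerUnipotent m * γ) 1 0 = m * γ 0 0 + γ 1 0 := by
  simp [mul_apply, Fin.sum_univ_two]

theorem T_zpow_mul_apply_zero_zero (x : ℤ) (γ : SL(2, ℤ)) :
    (T ^ x * γ) 0 0 = γ 0 0 + x * γ 1 0 := by
  simp [coe_T_zpow, mul_apply, Fin.sum_univ_two]

theorem T_zpow_mul_apply_one_zero (x : ℤ) (γ : SL(2, ℤ)) : (T ^ x * γ) 1 0 = γ 1 0 :=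
  congrFun (T_pow_mul_apply_one x γ) 0

theorem det_fin_two_eq_one {R : Type*} [CommRing R] (γ : SL(2, R)) :
    γ 0 0 * γ 1 1 - γ 0 1 * γ 1 0 = 1 := by
  rw [← det_fin_two]
  exact γ.det_coe

-- The condition on the `(1, 1)` entry follows from the other two because `det = 1`.
theorem mem_Gamma1_iff_dvd {M : ℕ} {γ : SL(2, ℤ)} :
    γ ∈ Gamma1 M ↔ (M : ℤ) ∣ γ 0 0 - 1 ∧ (M : ℤ) ∣ γ 1 0 := by
  have hdet := det_fin_two_eq_one γ
  simp only [Gamma1_mem, ← ZMod.intCast_zmod_eq_zero_iff_dvd, Int.cast_sub, Int.cast_one,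
    sub_eq_zero]
  refine ⟨fun h => ⟨h.1, h.2.2⟩, fun ⟨h00, h10⟩ => ⟨h00, ?_, h10⟩⟩
  have := congrArg (Int.cast : ℤ → ZMod M) hdet
  push_cast at this
  rwa [h00, h10, one_mul, mul_zero, sub_zero] at this

theorem lowerUnipotent_mem_Gamma1 {M : ℕ} {m : ℤ} (h : (M : ℤ) ∣ m) :
    lowerUnipotent m ∈ Gamma1 M :=
  mem_Gamma1_iff_dvd.2 ⟨by simp, by simpa using h⟩

theorem T_zpow_mem_Gamma1 (M : ℕ) (x : ℤ) : T ^ x ∈ Gamma1 M :=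
  mem_Gamma1_iff_dvd.2 ⟨by simp [coe_T_zpow], by simp [coe_T_zpow]⟩

theorem Gamma1_mono {M M' : ℕ} (h : M ∣ M') : Gamma1 M' ≤ Gamma1 M := fun _ hγ =>
  have h' : (M : ℤ) ∣ M' := Int.natCast_dvd_natCast.2 h
  mem_Gamma1_iff_dvd.2 ⟨h'.trans (mem_Gamma1_iff_dvd.1 hγ).1, h'.trans (mem_Gamma1_iff_dvd.1 hγ).2⟩

section Reduction

variable {p N : ℕ} {γ : SL(2, ℤ)}

theorem exists_lowerUnipotent_mul_apply_one_zero_eq (hp : Prime (p : ℤ)) (hγ : γ ∈ Gamma1 N) :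
    ∃ y s : ℤ, (lowerUnipotent (N * y) * γ) 1 0 = N * s ∧ ¬ (p : ℤ) ∣ s := by
  obtain ⟨s, hs⟩ := (mem_Gamma1_iff_dvd.1 hγ).2
  have hdet := det_fin_two_eq_one γ
  have hcop : IsCoprime (γ 0 0) s := ⟨γ 1 1, -(γ 0 1 * N), by linear_combination hdet + γ 0 1 * hs⟩
  obtain ⟨y, hy⟩ := hp.exists_not_dvd_add_mul hcop
  exact ⟨y, s + y * γ 0 0, by rw [lowerUnipotent_mul_apply_one_zero, hs]; ring, hy⟩

theorem exists_T_zpow_mul_dvd_apply_zero_zero_sub_one (hp : Prime (p : ℤ)) (hγ : γ ∈ Gamma1 N)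
    {s : ℤ} (hs : γ 1 0 = N * s) (hps : ¬ (p : ℤ) ∣ s) :
    ∃ x : ℤ, (p * N : ℤ) ∣ (T ^ x * γ) 0 0 - 1 := by
  obtain ⟨α, hα⟩ := (mem_Gamma1_iff_dvd.1 hγ).1
  obtain ⟨x, hx⟩ := ((hp.coprime_iff_not_dvd).2 hps).symm.exists_dvd_add_mul α
  refine ⟨x, ?_⟩
  rw [T_zpow_mul_apply_zero_zero, hs,
    show γ 0 0 + x * (N * s) - 1 = (α + x * s) * N by linear_combination hα]
  exact mul_dvd_mul_right hx _

theorem exists_lowerUnipotent_mul_mem_Gamma1 (hp : Prime (p : ℤ))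
    (h00 : (p * N : ℤ) ∣ γ 0 0 - 1) (h10 : (N : ℤ) ∣ γ 1 0) : ∃ y : ℤ, lowerUnipotent (N * y) * γ ∈ Gamma1 (p * N) := by
  have hpa : ¬ (p : ℤ) ∣ γ 0 0 := fun hpa => hp.not_dvd_one <| by
    simpa using dvd_sub hpa ((dvd_mul_right _ _).trans h00)
  obtain ⟨s, hs⟩ := h10
  obtain ⟨y, hy⟩ := ((hp.coprime_iff_not_dvd).2 hpa).symm.exists_dvd_add_mul s
  refine ⟨y, mem_Gamma1_iff_dvd.2 ⟨?_, ?_⟩⟩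
  · rwa [lowerUnipotent_mul_apply_zero_zero, Nat.cast_mul]
  · rw [lowerUnipotent_mul_apply_one_zero, hs, Nat.cast_mul,
      show N * y * γ 0 0 + N * s = (s + y * γ 0 0) * N by ring]
    exact mul_dvd_mul_right hy _

end Reduction

theorem closure_lowerN_union_Gamma1_pN (p : ℕ) (hp : p.Prime) (N : ℕ) :
    Subgroup.closure
      (({(⟨!![1, 0; (N : ℤ), 1], by simp [Matrix.det_fin_two_of]⟩ : SL(2, ℤ))} :
          Set SL(2, ℤ)) ∪
        (CongruenceSubgroup.Gamma1 (p * N) : Set SL(2, ℤ))) =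
      CongruenceSubgroup.Gamma1 N := by
  change Subgroup.closure ({lowerUnipotent N} ∪ (Gamma1 (p * N) : Set SL(2, ℤ))) = Gamma1 N
  set H := Subgroup.closure ({lowerUnipotent N} ∪ (Gamma1 (p * N) : Set SL(2, ℤ)))
  have hp' : Prime (p : ℤ) := Nat.prime_iff_prime_int.mp hp
  have hL (y : ℤ) : lowerUnipotent (N * y) ∈ H := by
    rw [← lowerUnipotent_zpow]
    exact zpow_mem (Subgroup.subset_closure (Set.mem_union_left _ (Set.mem_singleton _))) y
  have hT (x : ℤ) : T ^ x ∈ H :=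
    Subgroup.subset_closure (Set.mem_union_right _ (T_zpow_mem_Gamma1 _ x))
  refine le_antisymm (Subgroup.closure_le _ |>.2 ?_) fun γ hγ => ?_
  · rintro _ (rfl | hγ)
    · exact lowerUnipotent_mem_Gamma1 (m := N) dvd_rfl
    · exact Gamma1_mono (dvd_mul_left N p) hγ
  obtain ⟨y₁, s, hs, hps⟩ := exists_lowerUnipotent_mul_apply_one_zero_eq hp' hγ
  have hγ₁ := mul_mem (lowerUnipotent_mem_Gamma1 (dvd_mul_right _ y₁)) hγ
  obtain ⟨x, hx⟩ := exists_T_zpow_mul_dvd_apply_zero_zero_sub_one hp' hγ₁ hs hps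
  obtain ⟨y₂, hy₂⟩ := exists_lowerUnipotent_mul_mem_Gamma1 hp' hx
    (by rw [T_zpow_mul_apply_one_zero, hs]; exact dvd_mul_right _ _)
  rw [← Subgroup.mul_mem_cancel_left _ (hL y₁), ← Subgroup.mul_mem_cancel_left _ (hT x),
    ← Subgroup.mul_mem_cancel_left _ (hL y₂)]
  exact Subgroup.subset_closure (Or.inr hy₂)
end

section
/- Define E(a,b,c,d) = ac(1-d²) + d(b-c+3) - 3. If [[a,b],[c,d]] ∈ SL₂(ℤ) with c ≡ 0 (mod 4) and d odd, then E(a, b, c+4a, d+4b) - E(a, b, c, d) ≡ -4 (mod 24). -/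
def E (a b c d : ℤ) : ℤ := a * c * (1 - d ^ 2) + d * (b - c + 3) - 3

/-! Modulo 8 the term `a c (1 - d²)` of `E` vanishes because `8 ∣ d² - 1` for odd `d`, and the
difference of the remaining terms is `-4 (a d - b c) + 4 b (b + 1)` modulo 8. Modulo 3 the claim
is a finite check over `SL₂(ℤ/3)`. -/

lemma E_modEq_eight_of_odd (a b c : ℤ) {d : ℤ} (hd : Odd d) :
    E a b c d ≡ d * (b - c + 3) - 3 [ZMOD 8] := by
  obtain ⟨e, rfl⟩ := hd
  obtain ⟨k, hk⟩ := Int.even_mul_succ_self e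
  exact Int.modEq_iff_dvd.mpr ⟨a * c * k, by unfold E; linear_combination (4 * a * c) * hk⟩

lemma E_shift_sub_E_modEq_eight {a b c d : ℤ} (h : a * d - b * c = 1) (hd : Odd d) :
    E a b (c + 4 * a) (d + 4 * b) - E a b c d ≡ -4 [ZMOD 8] := by
  have hd' : Odd (d + 4 * b) := hd.add_even ⟨2 * b, by ring⟩
  obtain ⟨k, hk⟩ := Int.even_mul_succ_self b
  refine ((E_modEq_eight_of_odd a b _ hd').sub (E_modEq_eight_of_odd a b c hd)).trans ?_
  exact Int.modEq_iff_dvd.mpr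
    ⟨-(k + b - b * c - 2 * a * b), by linear_combination 4 * h - 4 * hk⟩

lemma E_shift_sub_E_modEq_three {a b c d : ℤ} (h : a * d - b * c = 1) :
    E a b (c + 4 * a) (d + 4 * b) - E a b c d ≡ -4 [ZMOD 3] := by
  have hSL : ∀ a b c d : ZMod 3, a * d - b * c = 1 →
      a * (c + 4 * a) * (1 - (d + 4 * b) ^ 2) + (d + 4 * b) * (b - (c + 4 * a) + 3) - 3
        - (a * c * (1 - d ^ 2) + d * (b - c + 3) - 3) = -4 := by
    decide
  refine (ZMod.intCast_eq_intCast_iff _ _ 3).mp ?_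
  push_cast [E]
  exact hSL _ _ _ _ (by exact_mod_cast congrArg (Int.cast : ℤ → ZMod 3) h)

theorem E_diff_mod_24_general (a b c d : ℤ) (h : a * d - b * c = 1)
    (hd : Odd d) :
    E a b (c + 4 * a) (d + 4 * b) - E a b c d ≡ -4 [ZMOD 24] :=
  (Int.modEq_and_modEq_iff_modEq_mul (m := 8) (n := 3) (by norm_num)).mp
    ⟨E_shift_sub_E_modEq_eight h hd, E_shift_sub_E_modEq_three h⟩

theorem E_diff_mod_24 (a b c d : ℤ) (h : a * d - b * c = 1) (hc : (4 : ℤ) ∣ c)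
    (hd : Odd d) :
    E a b (c + 4 * a) (d + 4 * b) - E a b c d ≡ -4 [ZMOD 24] :=
  E_diff_mod_24_general a b c d h hd
end

section
/- Let m be a nonzero integer and d, d' odd integers with d ≡ d' (mod 4m). Then the extended Jacobi symbols satisfy (m/d) = (m/d'). -/
/-!
Replacing the denominator `b` of `J(a | b)` by an odd `b'` with `b + b' ≡ 0 (mod 4|a|)`
multiplies the symbol by `sgn a`. This reflection property is multiplicative in `a`, so it
suffices to check it for `a = -1`, `a = 2` and odd `a > 0`: the first two follow from the
supplementary laws (`χ₄` is odd and `χ₈` is even), the last from quadratic reciprocity, since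
`b ≡ -b' (mod a)` and the reciprocity sign changes by `χ₄ a` when `b` is replaced by `b'`.
Together with the periodicity of `J(a | ·)` modulo `4|a|` this shows that `(m / d)` equals the
Jacobi symbol of `m` over the least nonnegative residue of `d` modulo `4m`.
-/

/-- The extended Jacobi (Kronecker) symbol for odd denominators: the usual Jacobi
symbol when `d > 0`, and `sgn(m) * (m / |d|)` when `d < 0`, with `(0 / -1) = 1`. -/
def extJacobi (m d : ℤ) : ℤ :=
  if 0 < d then jacobiSym m d.natAbs
  else if m = 0 ∧ d = -1 then 1
  else m.sign * jacobiSym m d.natAbs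

open ZMod
open scoped NumberTheorySymbols

lemma ZMod.χ₄_neg (x : ZMod 4) : χ₄ (-x) = -χ₄ x := by fin_cases x <;> rfl

lemma ZMod.χ₈_neg (x : ZMod 8) : χ₈ (-x) = χ₈ x := by fin_cases x <;> rfl

lemma ZMod.natCast_eq_neg_of_dvd_add {n b b' : ℕ} (h : n ∣ b + b') : (b : ZMod n) = -b' :=
  eq_neg_of_add_eq_zero_left <| by exact_mod_cast (ZMod.natCast_eq_zero_iff _ _).2 h

lemma ZMod.χ₄_nat_eq_neg_of_four_dvd_add {b b' : ℕ} (h : 4 ∣ b + b') :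
    χ₄ b = -χ₄ b' := by
  rw [natCast_eq_neg_of_dvd_add h, χ₄_neg]

lemma ZMod.χ₈_nat_eq_of_eight_dvd_add {b b' : ℕ} (h : 8 ∣ b + b') : χ₈ b = χ₈ b' := by
  rw [natCast_eq_neg_of_dvd_add h, χ₈_neg]

def HasJacobiReflection (a : ℤ) : Prop :=
  ∀ ⦃b b' : ℕ⦄, Odd b → Odd b' → 4 * a.natAbs ∣ b + b' →
    J(a | b) = a.sign * J(a | b')

namespace HasJacobiReflection

variable {a c : ℤ}

theorem mul (ha : HasJacobiReflection a) (hc : HasJacobiReflection c) :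
    HasJacobiReflection (a * c) := by
  intro b b' hb hb' h
  rw [Int.natAbs_mul] at h
  rw [jacobiSym.mul_left, jacobiSym.mul_left,
    ha hb hb' ((mul_dvd_mul_left 4 (dvd_mul_right _ _)).trans h),
    hc hb hb' ((mul_dvd_mul_left 4 (dvd_mul_left _ _)).trans h), Int.sign_mul]
  ring

theorem pow (ha : HasJacobiReflection a) (e : ℕ) : HasJacobiReflection (a ^ e) := by
  induction e with
  | zero => intro b b' _ _ _; simp
  | succ e ih => rw [pow_succ]; exact ih.mul ha

end HasJacobiReflection

theorem hasJacobiReflection_zero : HasJacobiReflection 0 := by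
  intro b b' hb _ h
  simp only [Int.natAbs_zero, mul_zero, zero_dvd_iff] at h
  exact absurd h (by have := hb.pos; omega)

theorem hasJacobiReflection_neg_one : HasJacobiReflection (-1) := by
  intro b b' hb hb' h
  rw [jacobiSym.at_neg_one hb, jacobiSym.at_neg_one hb', 
    χ₄_nat_eq_neg_of_four_dvd_add (by simpa using h)]
  simp

theorem hasJacobiReflection_two : HasJacobiReflection 2 := by
  intro b b' hb hb' h
  rw [jacobiSym.at_two hb, jacobiSym.at_two hb', χ₈_nat_eq_of_eight_dvd_add h,
    show Int.sign 2 = 1 from rfl, one_mul]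

theorem hasJacobiReflection_natCast_of_odd {u : ℕ} (hu : Odd u) : HasJacobiReflection u := by
  intro b b' hb hb' h
  rw [Int.natAbs_natCast] at h
  have hu_dvd : u ∣ b + b' := (Dvd.intro_left 4 rfl).trans h
  have hqr : qrSign b' u = χ₄ u * qrSign b u := by
    rw [qrSign, qrSign, χ₄_nat_eq_neg_of_four_dvd_add (add_comm b b' ▸ dvd_of_mul_right_dvd h),
      jacobiSym.neg _ hu]
  have hden : J(b | u) = χ₄ u * J(b' | u) := by
    rw [← jacobiSym.neg _ hu]
    refine jacobiSym.mod_left' (Int.modEq_iff_dvd.2 ?_)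
    rw [show -(b' : ℤ) - b = -↑(b + b') by push_cast; ring, dvd_neg]
    exact_mod_cast hu_dvd
  rw [jacobiSym.quadratic_reciprocity' hu hb, jacobiSym.quadratic_reciprocity' hu hb', hqr, hden,
    Int.sign_natCast_of_ne_zero hu.pos.ne']
  ring

theorem hasJacobiReflection_natCast (n : ℕ) : HasJacobiReflection n := by
  rcases eq_or_ne n 0 with rfl | hn
  · exact hasJacobiReflection_zero
  obtain ⟨e, u, hu, rfl⟩ := Nat.exists_eq_two_pow_mul_odd hn
  push_cast
  exact (hasJacobiReflection_two.pow e).mul (hasJacobiReflection_natCast_of_odd hu)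

theorem hasJacobiReflection (a : ℤ) : HasJacobiReflection a := by
  obtain ⟨n, rfl | rfl⟩ := Int.eq_nat_or_neg a
  · exact hasJacobiReflection_natCast n
  · rw [neg_eq_neg_one_mul]
    exact hasJacobiReflection_neg_one.mul (hasJacobiReflection_natCast n)

theorem extJacobi_eq_jacobiSym_emod {m d : ℤ} (hm : m ≠ 0) (hd : Odd d) :
    extJacobi m d = J(m | (d % (4 * m)).toNat) := by
  set r := (d % (4 * m)).toNat
  have hr : (r : ℤ) = d % (4 * m) := Int.toNat_of_nonneg (Int.emod_nonneg _ (by positivity))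
  have hr_odd : Odd r := by
    rw [← Int.odd_coe_nat, hr, Int.odd_iff, Int.emod_emod_of_dvd d ⟨2 * m, by ring⟩]
    exact Int.odd_iff.1 hd
  have habs : 4 * |m| = |4 * m| := by rw [abs_mul, abs_of_pos (four_pos : (0 : ℤ) < 4)]
  unfold extJacobi
  split_ifs with hpos hm0
  · rw [jacobiSym.mod_right m (Int.natAbs_odd.2 hd)]
    congr 1
    zify
    rw [habs, Int.emod_abs, hr, abs_of_pos hpos]
  · exact absurd hm0.1 hm
  · refine (hasJacobiReflection m hr_odd (Int.natAbs_odd.2 hd) ?_).symm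
    zify
    rw [habs, abs_dvd, hr, abs_of_nonpos (not_lt.1 hpos)]
    exact ⟨-(d / (4 * m)), by rw [Int.emod_def]; ring⟩

theorem extJacobi_periodic (m d d' : ℤ) (hm : m ≠ 0) (hd : Odd d) (hd' : Odd d')
    (h : d ≡ d' [ZMOD 4 * m]) : extJacobi m d = extJacobi m d' := by
  rw [extJacobi_eq_jacobiSym_emod hm hd, extJacobi_eq_jacobiSym_emod hm hd', h]
end

section
/- Let [[a,b],[c,d]] ∈ SL₂(ℤ) with a > 0, b ≠ 0, c ≠ 0, and set c' = c + 4a, d' = d + 4b with c' ≠ 0. Then the extended Jacobi symbols satisfy (c/d) = (c'/d'). -/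
/-!
For odd `m` and `n`, quadratic reciprocity gives `(m/n) = ε(m, n) · J(n | |m|)`, where
`ε(m, n) = -1` exactly when `m ≡ n ≡ 3 (mod 4)`: the sign factors at infinity carried by the
extended symbol and by reciprocity for negative arguments cancel. Put `c' = c + 4a` and
`d' = d + 4b`. Then `c d' - c' d = -4`, so `c' d ≡ 4 (mod c)` and `c d' ≡ -4 (mod c')`. For odd
`c`, both sides of the identity therefore reduce to `J(c | |c'|)`, and the leftover signs agree
because `c ≡ c'` and `d ≡ d' (mod 4)` and `c' > c`. For even `c`, first replace `c` and `c'` by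
`c + k d` and `c' + k d'` with `k = ±1` (right multiplication by `[[1, 0], [k, 1]]`), choosing `k`
so that no numerator changes sign over a negative denominator.
-/

open ZMod NumberTheorySymbols

lemma ne_zero_of_odd {n : ℤ} (hn : Odd n) : n ≠ 0 := by
  rintro rfl
  simp at hn

lemma jacobiSym_eq_ite_mul_natAbs (m : ℤ) {b : ℕ} (hb : Odd b) :
    J(m | b) = (if m < 0 then (χ₄ b : ℤ) else 1) * J(m.natAbs | b) := by
  rcases lt_or_ge m 0 with hm | hm
  · rw [if_pos hm, ← jacobiSym.neg _ hb, show -(m.natAbs : ℤ) = m by omega]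
  · rw [if_neg hm.not_gt, one_mul, Int.natAbs_of_nonneg hm]

lemma jacobiSym_natAbs_reciprocity {m n : ℤ} (hm : Odd m) (hn : Odd n) :
    J(m | n.natAbs) = (if m % 4 = 3 ∧ n % 4 = 3 then -1 else 1) *
      (if m < 0 ∧ n < 0 then -1 else 1) * J(n | m.natAbs) := by
  have hu : m.natAbs % 2 = 1 := by have := Int.odd_iff.mp hm; omega
  have hv : n.natAbs % 2 = 1 := by have := Int.odd_iff.mp hn; omega
  rw [jacobiSym_eq_ite_mul_natAbs m (Nat.odd_iff.mpr hv),
    jacobiSym_eq_ite_mul_natAbs n (Nat.odd_iff.mpr hu),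
    ← jacobiSym.quadratic_reciprocity_if hu hv, χ₄_nat_eq_if_mod_four, χ₄_nat_eq_if_mod_four]
  generalize J(n.natAbs | m.natAbs) = x
  split_ifs <;> omega

lemma extJacobi_eq_ite_mul_jacobiSym {m n : ℤ} (hm : m ≠ 0) (hn : n ≠ 0) :
    extJacobi m n = (if m < 0 ∧ n < 0 then -1 else 1) * J(m | n.natAbs) := by
  unfold extJacobi
  rcases hn.lt_or_gt with hn | hn
  · rcases hm.lt_or_gt with hm | hm
    · simp [hm, hm.ne, hn, hn.not_gt, Int.sign_eq_neg_one_of_neg hm]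
    · simp [hm.ne', hn.not_gt, hm.not_gt, Int.sign_eq_one_of_pos hm]
  · simp [hn, hn.not_gt]

lemma extJacobi_quadratic_reciprocity {m n : ℤ} (hm : Odd m) (hn : Odd n) :
    extJacobi m n = (if m % 4 = 3 ∧ n % 4 = 3 then -1 else 1) * J(n | m.natAbs) := by
  rw [extJacobi_eq_ite_mul_jacobiSym (ne_zero_of_odd hm) (ne_zero_of_odd hn),
    jacobiSym_natAbs_reciprocity hm hn]
  generalize J(n | m.natAbs) = x
  split_ifs <;> omega

lemma extJacobi_add_mul_right {m n k : ℤ} (hm : m ≠ 0) (hmk : m + k * n ≠ 0) (hn : n ≠ 0)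
    (hsign : n < 0 → (m + k * n < 0 ↔ m < 0)) :
    extJacobi (m + k * n) n = extJacobi m n := by
  have hmod : (m + k * n) % (n.natAbs : ℤ) = m % (n.natAbs : ℤ) :=
    (Int.modEq_iff_dvd.mpr (by simp [Dvd.dvd.mul_left])).symm
  rw [extJacobi_eq_ite_mul_jacobiSym hmk hn, extJacobi_eq_ite_mul_jacobiSym hm hn,
    jacobiSym.mod_left' hmod]
  by_cases hn' : n < 0 <;> simp [hn', hsign]

lemma jacobiSym_eq_mul_of_mul_modEq {x y t : ℤ} {b : ℕ} (h : x * y ≡ t [ZMOD b])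
    (ht : J(t | b) ≠ 0) : J(y | b) = J(x | b) * J(t | b) := by
  have hxy : J(x | b) * J(y | b) = J(t | b) := by
    rw [← jacobiSym.mul_left]
    exact jacobiSym.mod_left' h
  have hx : J(x | b) ^ 2 = 1 := by
    rcases jacobiSym.trichotomy x b with h0 | h1 | h1
    · exact absurd (by rw [← hxy, h0, zero_mul]) ht
    all_goals simp [h1]
  calc J(y | b) = J(x | b) ^ 2 * J(y | b) := by rw [hx, one_mul]
    _ = J(x | b) * J(t | b) := by rw [← hxy]; ring

lemma extJacobi_eq_of_det_eq_neg_four {c d c' d' : ℤ} (hc : Odd c) (hd : Odd d)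
    (hdet : c * d' - c' * d = -4) (hc4 : c ≡ c' [ZMOD 4]) (hd4 : d ≡ d' [ZMOD 4])
    (hsign : c' < 0 → c < 0) : extJacobi c d = extJacobi c' d' := by
  have hc2 := Int.odd_iff.mp hc
  have hd2 := Int.odd_iff.mp hd
  unfold Int.ModEq at hc4 hd4
  have hc' : Odd c' := Int.odd_iff.mpr (by omega)
  have hd' : Odd d' := Int.odd_iff.mpr (by omega)
  have hu : Odd c.natAbs := Nat.odd_iff.mpr (by omega)
  have hu' : Odd c'.natAbs := Nat.odd_iff.mpr (by omega)
  have hdu : J(d | c.natAbs) = J(c' | c.natAbs) := by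
    have h4 : c' * d ≡ 4 [ZMOD c.natAbs] := Int.modEq_iff_dvd.mpr <| by
      rw [show 4 - c' * d = c * -d' by linarith]
      exact Int.natAbs_dvd.mpr (dvd_mul_right _ _)
    rw [jacobiSym_eq_mul_of_mul_modEq h4 (by rw [jacobiSym.at_four hu]; exact one_ne_zero),
      jacobiSym.at_four hu, mul_one]
  have hdu' : J(d' | c'.natAbs) = χ₄ c'.natAbs * J(c | c'.natAbs) := by
    have h4 : c * d' ≡ -4 [ZMOD c'.natAbs] := Int.modEq_iff_dvd.mpr <| by
      rw [show -4 - c * d' = c' * -d by linarith]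
      exact Int.natAbs_dvd.mpr (dvd_mul_right _ _)
    have hJ : J(-4 | c'.natAbs) = χ₄ c'.natAbs := by
      rw [jacobiSym.neg _ hu', jacobiSym.at_four hu', mul_one]
    rw [jacobiSym_eq_mul_of_mul_modEq h4 (by rw [hJ, χ₄_nat_eq_if_mod_four]; split_ifs <;> omega),
      hJ, mul_comm]
  rw [extJacobi_quadratic_reciprocity hc hd, extJacobi_quadratic_reciprocity hc' hd', hdu, hdu',
    jacobiSym_natAbs_reciprocity hc' hc, χ₄_nat_eq_if_mod_four]
  generalize J(c | c'.natAbs) = x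
  split_ifs <;> omega

lemma exists_odd_shift_preserving_signs {c d c' d' : ℤ} (hdet : c * d' - c' * d = -4)
    (hcc' : c < c') (hc : c ≠ 0) (hc' : c' ≠ 0) :
    ∃ k : ℤ, Odd k ∧ (d < 0 → (c + k * d < 0 ↔ c < 0)) ∧
      (d' < 0 → (c' + k * d' < 0 ↔ c' < 0)) ∧ (c' + k * d' < 0 → c + k * d < 0) := by
  -- Each excluded sign pattern would make `c d' - c' d` positive.
  rcases lt_or_gt_of_ne hc with hc | hc
  · rcases lt_or_gt_of_ne hc' with hc' | hc'
    · refine ⟨1, odd_one, by omega, by omega, fun hC' => ?_⟩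
      by_contra hC
      nlinarith
    · rcases lt_or_ge d 0 with hd | hd
      · refine ⟨1, odd_one, by omega, fun hd' => ?_, by omega⟩
        nlinarith
      · exact ⟨-1, odd_neg_one, by omega, by omega, by omega⟩
  · exact ⟨-1, odd_neg_one, by omega, by omega, fun hC' => by nlinarith⟩

theorem extJacobi_c_d_eq_c'_d'_general (a b c d : ℤ) (h : a * d - b * c = 1) (ha : 0 < a)
    (hc : c ≠ 0) (hc' : c + 4 * a ≠ 0) (hd : Odd d)
    (hd' : Odd (d + 4 * b)) :
    extJacobi c d = extJacobi (c + 4 * a) (d + 4 * b) := by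
  have hdet : c * (d + 4 * b) - (c + 4 * a) * d = -4 := by linear_combination (-4) * h
  have hc4 : c ≡ c + 4 * a [ZMOD 4] := Int.modEq_iff_dvd.mpr ⟨a, by ring⟩
  have hd4 : d ≡ d + 4 * b [ZMOD 4] := Int.modEq_iff_dvd.mpr ⟨b, by ring⟩
  rcases Int.even_or_odd c with hc_even | hc_odd
  · obtain ⟨k, hk, hsign, hsign', hsign_shift⟩ :=
      exists_odd_shift_preserving_signs hdet (by linarith) hc hc'
    have hC : Odd (c + k * d) := hc_even.add_odd (hk.mul hd)
    have hC' : Odd (c + 4 * a + k * (d + 4 * b)) :=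
      (hc_even.add ⟨2 * a, by ring⟩).add_odd (hk.mul hd')
    rw [← extJacobi_add_mul_right hc (ne_zero_of_odd hC) (ne_zero_of_odd hd) hsign,
      ← extJacobi_add_mul_right hc' (ne_zero_of_odd hC') (ne_zero_of_odd hd') hsign']
    exact extJacobi_eq_of_det_eq_neg_four hC hd (by linear_combination (-4) * h)
      (hc4.add (hd4.mul_left k)) hd4 hsign_shift
  · exact extJacobi_eq_of_det_eq_neg_four hc_odd hd hdet hc4 hd4 (fun _ => by linarith)

theorem extJacobi_c_d_eq_c'_d' (a b c d : ℤ) (h : a * d - b * c = 1) (ha : 0 < a)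
    (hb : b ≠ 0) (hc : c ≠ 0) (hc' : c + 4 * a ≠ 0) (hd : Odd d)
    (hd' : Odd (d + 4 * b)) :
    extJacobi c d = extJacobi (c + 4 * a) (d + 4 * b) :=
  extJacobi_c_d_eq_c'_d'_general a b c d h ha hc hc' hd hd'
end

section
/- If [[a,b],[c,d]] ∈ SL₂(ℤ) with c ≠ 0, d ≠ 0, b ≠ 0, and a > 0, then the extended Jacobi symbol satisfies (c/d) = (-b/d). -/
theorem jacobiSym_eq_of_mul_modEq_one {x y : ℤ} {n : ℕ} (hxy : x * y ≡ 1 [ZMOD n]) :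
    jacobiSym x n = jacobiSym y n :=
  Int.eq_of_mul_eq_one <| by
    rw [← jacobiSym.mul_left, jacobiSym.mod_left' hxy, jacobiSym.one_left]

theorem Int.sign_eq_sign_of_mul_pos {x y : ℤ} (hxy : 0 < x * y) : x.sign = y.sign :=
  Int.eq_of_mul_eq_one <| by rw [← Int.sign_mul, Int.sign_eq_one_of_pos hxy]

theorem extJacobi_congr {m n d : ℤ} (hJ : jacobiSym m d.natAbs = jacobiSym n d.natAbs)
    (hsign : d ≤ 0 → m.sign = n.sign) : extJacobi m d = extJacobi n d := by
  unfold extJacobi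
  by_cases hd : 0 < d
  · simp only [hd, if_true, hJ]
  · have hs := hsign (not_lt.mp hd)
    have hzero : m = 0 ↔ n = 0 := by
      rw [← Int.sign_eq_zero_iff_zero, hs, Int.sign_eq_zero_iff_zero]
    simp only [hd, if_false, hzero, hs, hJ]

theorem extJacobi_c_eq_neg_b_general (a b c d : ℤ) (h : a * d - b * c = 1)
    (ha : 0 < a) :
    extJacobi c d = extJacobi (-b) d := by
  have hmod : c * -b ≡ 1 [ZMOD d.natAbs] :=
    Int.modEq_natAbs.mpr <| Int.modEq_iff_dvd.mpr ⟨a, by linear_combination -h⟩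
  exact extJacobi_congr (jacobiSym_eq_of_mul_modEq_one hmod) fun hd =>
    Int.sign_eq_sign_of_mul_pos (by nlinarith)

theorem extJacobi_c_eq_neg_b (a b c d : ℤ) (h : a * d - b * c = 1) (hd : Odd d)
    (ha : 0 < a) (hb : b ≠ 0) (hc : c ≠ 0) (hd0 : d ≠ 0) :
    extJacobi c d = extJacobi (-b) d :=
  extJacobi_c_eq_neg_b_general a b c d h ha
end

section
/- The group Γ₁(4) (matrices in SL₂(ℤ) congruent to the identity's upper-triangular unipotent form mod 4, i.e. a ≡ d ≡ 1 and c ≡ 0 mod 4) is generated by the matrices T = [[1,1],[0,1]] and [[1,0],[4,1]]. -/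
/-!
Euclid's algorithm on the first column. For `A ∈ Γ₁(4)` with lower-left entry `c ≠ 0`, left
multiplication by a power of `T` replaces `a` by `a + j c` with `2 |a + j c| < |c|`, and then a
power of `[[1,0],[4,1]]` replaces `c` by `c + 4 l a'` with `|c + 4 l a'| ≤ 2 |a'| < |c|`.
When `c = 0`, the conditions `ad = 1` and `a ≡ 1 (mod 4)` force `A = Tᵇ`.
-/

open Matrix MatrixGroups CongruenceSubgroup

theorem Int.exists_two_mul_abs_add_mul_le (x : ℤ) {y : ℤ} (hy : y ≠ 0) :
    ∃ n : ℤ, 2 * |x + n * y| ≤ |y| := by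
  have hm : 0 < y.natAbs := Int.natAbs_pos.mpr hy
  obtain ⟨n, hn⟩ : y ∣ Int.bmod x y.natAbs - x := by
    rw [← Int.natAbs_dvd]
    exact Int.ModEq.dvd (Int.bmod_emod (x := x) (m := y.natAbs)).symm
  refine ⟨n, ?_⟩
  rw [show x + n * y = Int.bmod x y.natAbs by linarith, Int.abs_eq_natAbs, Int.abs_eq_natAbs]
  have := Int.le_bmod (x := x) hm
  have := Int.bmod_le (x := x) hm
  omega

theorem Int.exists_abs_add_four_mul_mul_lt {a c : ℤ} (ha : a % 2 = 1) (hc : 4 ∣ c) (hc0 : c ≠ 0) :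
    ∃ j l : ℤ, |c + 4 * l * (a + j * c)| < |c| := by
  obtain ⟨j, hj⟩ := Int.exists_two_mul_abs_add_mul_le a hc0
  have hodd : (a + j * c) % 2 = 1 := by
    obtain ⟨k, rfl⟩ := hc
    rw [show a + j * (4 * k) = a + 2 * (2 * j * k) by ring]
    omega
  -- `a + j c` is odd while `c / 2` is even, so they cannot have the same absolute value.
  have hlt : 2 * |a + j * c| < |c| := by
    refine hj.lt_of_ne fun h => ?_
    rw [Int.abs_eq_natAbs, Int.abs_eq_natAbs] at h
    omega
  obtain ⟨l, hl⟩ := Int.exists_two_mul_abs_add_mul_le c (show 4 * (a + j * c) ≠ 0 by omega)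
  refine ⟨j, l, ?_⟩
  rw [abs_mul, abs_of_pos (by norm_num : (0 : ℤ) < 4)] at hl
  rw [show c + 4 * l * (a + j * c) = c + l * (4 * (a + j * c)) by ring]
  linarith

namespace ModularGroup

def lowerUnipotent (N : ℤ) : SL(2, ℤ) := ⟨!![1, 0; N, 1], by simp [det_fin_two_of]⟩

@[simp]
theorem coe_lowerUnipotent (N : ℤ) : ↑(lowerUnipotent N) = !![1, 0; N, 1] := rfl

theorem lowerUnipotent_add (M N : ℤ) :
    lowerUnipotent (M + N) = lowerUnipotent M * lowerUnipotent N := by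
  ext i j; fin_cases i <;> fin_cases j <;> simp

theorem lowerUnipotent_zpow (N m : ℤ) : lowerUnipotent N ^ m = lowerUnipotent (N * m) := by
  induction m with
  | zero => ext i j; fin_cases i <;> fin_cases j <;> simp
  | succ m ih => rw [_root_.zpow_add_one, ih, ← lowerUnipotent_add, mul_add_one]
  | pred m ih => rw [_root_.zpow_sub_one, ih, mul_inv_eq_iff_eq_mul, ← lowerUnipotent_add]; ring_nf

theorem lowerUnipotent_mul_apply_one_zero (N : ℤ) (A : SL(2, ℤ)) :
    (lowerUnipotent N * A) 1 0 = A 1 0 + N * A 0 0 := by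
  simp [Matrix.mul_apply, Fin.sum_univ_two]; ring

theorem T_zpow_mul_apply_zero_zero (n : ℤ) (A : SL(2, ℤ)) :
    (T ^ n * A) 0 0 = A 0 0 + n * A 1 0 := by
  simp [coe_T_zpow, Matrix.mul_apply, Fin.sum_univ_two]

theorem T_mem_Gamma1 (N : ℕ) : T ∈ Gamma1 N := by simp

theorem lowerUnipotent_mem_Gamma1 (N : ℕ) : lowerUnipotent N ∈ Gamma1 N := by simp

theorem eq_T_zpow_of_mem_Gamma1 {N : ℕ} (hN : 2 < N) {A : SL(2, ℤ)} (hA : A ∈ Gamma1 N)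
    (hc : A 1 0 = 0) : A = T ^ A 0 1 := by
  have had : A 0 0 * A 1 1 = 1 := by
    have := A.det_coe
    rw [det_fin_two, hc] at this
    linarith
  rcases Int.eq_one_or_neg_one_of_mul_eq_one' had with ⟨ha, hd⟩ | ⟨ha, -⟩
  · ext i j; fin_cases i <;> fin_cases j <;> simp [ha, hc, hd, coe_T_zpow]
  · have := ((Gamma1_mem N A).mp hA).1
    rw [ha, Int.cast_neg, Int.cast_one] at this
    exact absurd this (haveI := Fact.mk hN; ZMod.neg_one_ne_one)

theorem exists_abs_lowerUnipotent_zpow_mul_T_zpow_mul_apply_lt {A : SL(2, ℤ)}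
    (hA : A ∈ Gamma1 4) (hc : A 1 0 ≠ 0) :
    ∃ j l : ℤ, |(lowerUnipotent 4 ^ l * (T ^ j * A)) 1 0| < |A 1 0| := by
  obtain ⟨ha, -, hc4⟩ := (Gamma1_mem 4 A).mp hA
  have ha2 : A 0 0 % 2 = 1 := by
    have := (ZMod.intCast_eq_intCast_iff' (A 0 0) 1 4).mp (by simpa using ha)
    omega
  have hc4 : (4 : ℤ) ∣ A 1 0 := by exact_mod_cast (ZMod.intCast_zmod_eq_zero_iff_dvd _ 4).mp hc4
  obtain ⟨j, l, hlt⟩ := Int.exists_abs_add_four_mul_mul_lt ha2 hc4 hc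
  refine ⟨j, l, ?_⟩
  rwa [lowerUnipotent_zpow, lowerUnipotent_mul_apply_one_zero, T_zpow_mul_apply_zero_zero,
    T_pow_mul_apply_one]

theorem mem_closure_T_lowerUnipotent_of_mem_Gamma1_four {A : SL(2, ℤ)} (hA : A ∈ Gamma1 4) :
    A ∈ Subgroup.closure {T, lowerUnipotent 4} := by
  set H := Subgroup.closure {T, lowerUnipotent 4}
  have hT : T ∈ H := Subgroup.subset_closure (by simp)
  have hL : lowerUnipotent 4 ∈ H := Subgroup.subset_closure (by simp)
  induction h : (A 1 0).natAbs using Nat.strong_induction_on generalizing A with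
  | _ n ih =>
  rcases eq_or_ne (A 1 0) 0 with hc | hc
  · rw [eq_T_zpow_of_mem_Gamma1 (by norm_num) hA hc]
    exact zpow_mem hT _
  obtain ⟨j, l, hlt⟩ := exists_abs_lowerUnipotent_zpow_mul_T_zpow_mul_apply_lt hA hc
  have hB : lowerUnipotent 4 ^ l * (T ^ j * A) ∈ H := by
    refine ih _ ?_ ?_ rfl
    · rw [Int.abs_eq_natAbs, Int.abs_eq_natAbs] at hlt
      omega
    · exact mul_mem (zpow_mem (lowerUnipotent_mem_Gamma1 4) l)
        (mul_mem (zpow_mem (T_mem_Gamma1 4) j) hA)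
  exact (H.mul_mem_cancel_left (zpow_mem hT j)).mp
    ((H.mul_mem_cancel_left (zpow_mem hL l)).mp hB)

end ModularGroup

theorem Gamma1_four_eq_closure :
    Subgroup.closure
      ({(⟨!![1, 1; 0, 1], by simp [Matrix.det_fin_two_of]⟩ : SL(2, ℤ)),
        (⟨!![1, 0; 4, 1], by simp [Matrix.det_fin_two_of]⟩ : SL(2, ℤ))} :
        Set SL(2, ℤ)) = CongruenceSubgroup.Gamma1 4 := by
  change Subgroup.closure {ModularGroup.T, ModularGroup.lowerUnipotent 4} = _
  refine le_antisymm ?_ fun A hA => ModularGroup.mem_closure_T_lowerUnipotent_of_mem_Gamma1_four hA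
  rw [Subgroup.closure_le]
  rintro _ (rfl | rfl)
  exacts [ModularGroup.T_mem_Gamma1 4, ModularGroup.lowerUnipotent_mem_Gamma1 4]
end
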